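/- Let X be a multiplicative prestreak and a, b, c, d ∈ X. (1) If a # b and c # d then a·d + b·c # a·c + b·d. (2) If moreover X is archimedean, the converse holds: a·d + b·c # a·c + b·d implies a # b and c # d. -/

import Mathlib

/-- A prestreak: a strict order (asymmetric and cotransitive) together with a
commutative additive monoid structure and a commutative multiplicative monoid
structure on the positive part, compatible with the order.  (The intrinsic
topology conditions of the paper are omitted, being vacuous in the classical
set-theoretic setting.) -/
structure Prestreak (X : Type*) where
  lt : X → X → Prop
  add : X → X → X
  zero : X
  mul : X → X → X
  one : X
  lt_asymm : ∀ a b, ¬ (lt a b ∧ lt b a)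
  lt_cotrans : ∀ a b x, lt a b → lt a x ∨ lt x b
  add_comm : ∀ a b, add a b = add b a
  add_assoc : ∀ a b c, add (add a b) c = add a (add b c)
  add_zero : ∀ a, add a zero = a
  zero_lt_one : lt zero one
  mul_pos : ∀ a b, lt zero a → lt zero b → lt zero (mul a b)
  mul_comm : ∀ a b, lt zero a → lt zero b → mul a b = mul b a
  mul_assoc : ∀ a b c, lt zero a → lt zero b → lt zero c →
    mul (mul a b) c = mul a (mul b c)
  mul_one : ∀ a, lt zero a → mul a one = a
  mul_add : ∀ a b c, lt zero a → lt zero b → lt zero c →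
    mul (add a b) c = add (mul a c) (mul b c)
  add_lt_add_iff : ∀ a b x, (lt (add a x) (add b x) ↔ lt a b)
  mul_lt_mul_iff : ∀ a b x, lt zero a → lt zero b → lt zero x →
    (lt (mul a x) (mul b x) ↔ lt a b)

namespace Prestreak

variable {X : Type*}

/-- Multiplication by a natural number: `0·a = 0`, `(n+1)·a = n·a + a`. -/
def nsmul (P : Prestreak X) : ℕ → X → X
  | 0, _ => P.zero
  | n + 1, a => P.add (nsmul P n a) a

/-- The canonical image of a natural number, `n ↦ n·1`. -/
def ofNat (P : Prestreak X) (n : ℕ) : X := P.nsmul n P.one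

/-- Comparison `x < q` of an element of a prestreak with a rational number,
using the canonical representation `q = (q.num⁺ − q.num⁻)/q.den`:
`x < (a−b)/c  :=  c·x + b < a`. -/
def ltQ (P : Prestreak X) (x : X) (q : ℚ) : Prop :=
  P.lt (P.add (P.nsmul q.den x) (P.ofNat ((-q.num).toNat))) (P.ofNat q.num.toNat)

/-- Comparison `q < x` of a rational with an element of a prestreak:
`(a−b)/c < x  :=  a < c·x + b`. -/
def qLt (P : Prestreak X) (q : ℚ) (x : X) : Prop :=
  P.lt (P.ofNat q.num.toNat) (P.add (P.nsmul q.den x) (P.ofNat ((-q.num).toNat)))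

/-- The archimedean property for prestreaks. -/
def Archimedean (P : Prestreak X) : Prop :=
  ∀ a b c d : X, P.lt b d →
    ∃ n : ℕ, P.lt (P.add a (P.nsmul n b)) (P.add c (P.nsmul n d))

/-- Tightness: antisymmetry of `≤` (where `a ≤ b := ¬ b < a`).
A streak is a tight archimedean prestreak. -/
def Tight (P : Prestreak X) : Prop :=
  ∀ a b : X, ¬ P.lt a b → ¬ P.lt b a → a = b

/-- The apartness relation `a # b := a < b ∨ b < a`. -/
def Apart (P : Prestreak X) (a b : X) : Prop := P.lt a b ∨ P.lt b a

/-- A morphism of prestreaks: preserves `<`, `+`, `0`, `1` and products of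
positive elements. -/
def IsHom {Y : Type*} (P : Prestreak X) (Q : Prestreak Y) (f : X → Y) : Prop :=
  (∀ a b, P.lt a b → Q.lt (f a) (f b)) ∧
  (∀ a b, f (P.add a b) = Q.add (f a) (f b)) ∧
  f P.zero = Q.zero ∧ f P.one = Q.one ∧
  (∀ a b, P.lt P.zero a → P.lt P.zero b → f (P.mul a b) = Q.mul (f a) (f b))

/-- A multiplicative structure on a prestreak: a total multiplication which is
commutative, associative, distributes over addition, has unit `1`, restricts to
the given multiplication on positive elements, and satisfies the multiplicity
condition. -/
def IsMultiplicative (P : Prestreak X) (tmul : X → X → X) : Prop :=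
  (∀ a b, tmul a b = tmul b a) ∧
  (∀ a b c, tmul (tmul a b) c = tmul a (tmul b c)) ∧
  (∀ a b c, tmul (P.add a b) c = P.add (tmul a c) (tmul b c)) ∧
  (∀ a, tmul a P.one = a) ∧
  (∀ a b, P.lt P.zero a → P.lt P.zero b → tmul a b = P.mul a b) ∧
  (∀ a b c d, P.lt b a → P.lt d c →
    P.lt (P.add (tmul a d) (tmul b c)) (P.add (tmul a c) (tmul b d)))

end Prestreak

/-!
Write `p = a·d + b·c` and `q = a·c + b·d`, so that "`q - p = (a - b)(c - d)`". The forward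
direction is the multiplicity condition, applied to the four sign patterns of `a - b` and `c - d`.
For the converse, suppose `¬ a # b` and `p < q`. If `c < d`, then `n·b < n·a + 1` for every `n`,
and multiplicity applied to `n·a + 1 > n·b` and `d > c` gives `c + n·q < d + n·p`, which
contradicts the archimedean property; `d < c` is symmetric. If `¬ d < c`, replacing `d` by
`d + 1 > c` turns `p < q` into `p + a < q + b`, which still holds because `¬ b < a`, so the
first case applies.
-/

namespace Prestreak

variable {X : Type*} (P : Prestreak X)

instance : Std.Associative P.add := ⟨P.add_assoc⟩

instance : Std.Commutative P.add := ⟨P.add_comm⟩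

theorem zero_add (a : X) : P.add P.zero a = a := by
  rw [P.add_comm, P.add_zero]

theorem not_lt_of_lt {a b : X} (h : P.lt a b) : ¬ P.lt b a :=
  fun h' => P.lt_asymm a b ⟨h, h'⟩

theorem lt_add_one (a : X) : P.lt a (P.add a P.one) := by
  simpa only [P.zero_add, P.add_comm P.one] using
    (P.add_lt_add_iff P.zero P.one a).mpr P.zero_lt_one

theorem lt_add_one_of_not_lt {a b : X} (h : ¬ P.lt a b) : P.lt b (P.add a P.one) :=
  (P.lt_cotrans _ _ b (P.lt_add_one a)).resolve_left h

theorem add_lt_add_of_lt_of_not_lt {a b c d : X} (hab : P.lt a b) (hdc : ¬ P.lt d c) :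
    P.lt (P.add a c) (P.add b d) := by
  refine (P.lt_cotrans _ _ (P.add b d) ((P.add_lt_add_iff a b c).mpr hab)).resolve_right ?_
  rwa [P.add_comm b, P.add_comm b, P.add_lt_add_iff]

theorem lt_or_lt_of_add_lt_add {a b c d : X} (h : P.lt (P.add a c) (P.add b d)) :
    P.lt a b ∨ P.lt c d := by
  refine (P.lt_cotrans _ _ (P.add b c) h).imp (P.add_lt_add_iff a b c).mp fun h' => ?_
  rwa [P.add_comm b, P.add_comm b, P.add_lt_add_iff] at h'

theorem nsmul_add (n : ℕ) (a b : X) :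
    P.nsmul n (P.add a b) = P.add (P.nsmul n a) (P.nsmul n b) := by
  induction n with
  | zero => exact (P.add_zero P.zero).symm
  | succ n ih => simp only [nsmul, ih]; ac_rfl

theorem not_nsmul_lt_nsmul {a b : X} (h : ¬ P.lt a b) (n : ℕ) :
    ¬ P.lt (P.nsmul n a) (P.nsmul n b) := by
  induction n with
  | zero => exact fun h' => P.not_lt_of_lt h' h'
  | succ n ih => exact fun h' => (P.lt_or_lt_of_add_lt_add h').elim ih h

end Prestreak

namespace Prestreak.IsMultiplicative

variable {X : Type*} {P : Prestreak X} {tmul : X → X → X}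

theorem mul_comm (hM : P.IsMultiplicative tmul) (a b : X) : tmul a b = tmul b a :=
  hM.1 a b

theorem add_mul (hM : P.IsMultiplicative tmul) (a b c : X) :
    tmul (P.add a b) c = P.add (tmul a c) (tmul b c) :=
  hM.2.2.1 a b c

theorem mul_add (hM : P.IsMultiplicative tmul) (a b c : X) :
    tmul a (P.add b c) = P.add (tmul a b) (tmul a c) := by
  rw [hM.mul_comm, hM.add_mul, hM.mul_comm b, hM.mul_comm c]

theorem mul_one (hM : P.IsMultiplicative tmul) (a : X) : tmul a P.one = a :=
  hM.2.2.2.1 a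

theorem one_mul (hM : P.IsMultiplicative tmul) (a : X) : tmul P.one a = a := by
  rw [hM.mul_comm, hM.mul_one]

theorem multiplicity (hM : P.IsMultiplicative tmul) {a b c d : X} (hba : P.lt b a)
    (hdc : P.lt d c) : P.lt (P.add (tmul a d) (tmul b c)) (P.add (tmul a c) (tmul b d)) :=
  hM.2.2.2.2.2 a b c d hba hdc

/-- `0·b` need not vanish: `0·b = 0·b + 0·b` only cancels in a tight prestreak. -/
theorem nsmul_mul (hM : P.IsMultiplicative tmul) (n : ℕ) (a b : X) :
    tmul (P.nsmul n a) b = P.add (tmul P.zero b) (P.nsmul n (tmul a b)) := by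
  induction n with
  | zero => exact (P.add_zero _).symm
  | succ n ih => rw [Prestreak.nsmul, hM.add_mul, ih, P.add_assoc, Prestreak.nsmul]

theorem add_nsmul_lt_of_not_lt_of_lt (hM : P.IsMultiplicative tmul) {a b c d : X}
    (hab : ¬ P.lt a b) (hcd : P.lt c d) (n : ℕ) :
    P.lt (P.add c (P.nsmul n (P.add (tmul a c) (tmul b d))))
      (P.add d (P.nsmul n (P.add (tmul a d) (tmul b c)))) := by
  have h := hM.multiplicity (P.lt_add_one_of_not_lt (P.not_nsmul_lt_nsmul hab n)) hcd
  simp only [hM.add_mul, hM.one_mul, hM.nsmul_mul] at h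
  rw [← P.add_lt_add_iff _ _ (P.add (tmul P.zero c) (tmul P.zero d)), P.nsmul_add, P.nsmul_add]
  convert h using 1 <;> ac_rfl

theorem not_lt_of_not_lt_of_lt (hM : P.IsMultiplicative tmul) (hA : P.Archimedean)
    {a b c d : X} (hab : ¬ P.lt a b) (hcd : P.lt c d) :
    ¬ P.lt (P.add (tmul a d) (tmul b c)) (P.add (tmul a c) (tmul b d)) := fun h => by
  obtain ⟨n, hn⟩ := hA d _ c _ h
  exact P.not_lt_of_lt hn (hM.add_nsmul_lt_of_not_lt_of_lt hab hcd n)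

theorem not_lt_of_not_apart (hM : P.IsMultiplicative tmul) (hA : P.Archimedean)
    {a b : X} (hab : ¬ P.Apart a b) (c d : X) :
    ¬ P.lt (P.add (tmul a d) (tmul b c)) (P.add (tmul a c) (tmul b d)) := by
  obtain ⟨hab, hba⟩ := not_or.mp hab
  intro h
  by_cases hdc : P.lt d c
  · refine hM.not_lt_of_not_lt_of_lt hA hba hdc ?_
    rwa [P.add_comm (tmul b c), P.add_comm (tmul b d)]
  · refine hM.not_lt_of_not_lt_of_lt hA hab (P.lt_add_one_of_not_lt hdc) ?_
    rw [hM.mul_add, hM.mul_add, hM.mul_one, hM.mul_one]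
    convert P.add_lt_add_of_lt_of_not_lt h hba using 1 <;> ac_rfl

theorem apart_left_of_apart_cross (hM : P.IsMultiplicative tmul) (hA : P.Archimedean)
    {a b c d : X} (h : P.Apart (P.add (tmul a d) (tmul b c)) (P.add (tmul a c) (tmul b d))) :
    P.Apart a b := by
  by_contra hab
  rcases h with h | h
  exacts [hM.not_lt_of_not_apart hA hab c d h, hM.not_lt_of_not_apart hA hab d c h]

theorem apart_cross_of_apart (hM : P.IsMultiplicative tmul) {a b c d : X}
    (hab : P.Apart a b) (hcd : P.Apart c d) :
    P.Apart (P.add (tmul a d) (tmul b c)) (P.add (tmul a c) (tmul b d)) := by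
  rcases hab with hab | hba <;> rcases hcd with hcd | hdc
  · left
    rw [P.add_comm (tmul a d), P.add_comm (tmul a c)]
    exact hM.multiplicity hab hcd
  · right
    rw [P.add_comm (tmul a d), P.add_comm (tmul a c)]
    exact hM.multiplicity hab hdc
  · exact Or.inr (hM.multiplicity hba hcd)
  · exact Or.inl (hM.multiplicity hba hdc)

end Prestreak.IsMultiplicative

/-- In a multiplicative prestreak, `a # b` and `c # d` imply
`a·d + b·c # a·c + b·d`; in an archimedean one, the converse also holds. -/
theorem apartness_multiplicity {X : Type*} (P : Prestreak X)
    (tmul : X → X → X) (hM : P.IsMultiplicative tmul) (a b c d : X) :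
    (P.Apart a b → P.Apart c d →
      P.Apart (P.add (tmul a d) (tmul b c)) (P.add (tmul a c) (tmul b d))) ∧
    (P.Archimedean →
      P.Apart (P.add (tmul a d) (tmul b c)) (P.add (tmul a c) (tmul b d)) →
      P.Apart a b ∧ P.Apart c d) := by
  refine ⟨hM.apart_cross_of_apart, fun hA h => ⟨hM.apart_left_of_apart_cross hA h, ?_⟩⟩
  refine hM.apart_left_of_apart_cross hA (c := a) (d := b) ?_
  rwa [hM.mul_comm c b, hM.mul_comm d a, P.add_comm (tmul b c), hM.mul_comm c a,
    hM.mul_comm d b]
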